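/- Let E = Π_{i=1}^N E_i be a product of Euclidean spaces with norm ‖x‖² = Σ_i ‖x_i‖², let f : E → ℝ be differentiable with L-Lipschitz gradient, let g(x) = Σ_i g_i(x_i) with each g_i continuous, let K : E → ℝ be differentiable and m-strongly convex, and let 0 < ε ≤ ε̄ < m/L. Set F = f + g and a = (m − ε̄L)/(2ε̄). Fix x ∈ E and an index i, and suppose y* globally minimizes y ↦ ⟨(∇f(x))_i, y_i − x_i⟩ + g_i(y_i) + (1/ε)D(x,y) over E, and that (y*)_j = x_j for all j ≠ i. Then F(y*) − F(x) ≤ −a‖x − y*‖². -/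

import Mathlib

open RealInnerProductSpace

lemma convex_grad_le {X : Type*} [NormedAddCommGroup X] [InnerProductSpace ℝ X]
    [CompleteSpace X] {h : X → ℝ} {h' : X} {x : X} (hx : HasGradientAt h h' x)
    (hc : ConvexOn ℝ Set.univ h) (y : X) : h x + ⟪h', y - x⟫ ≤ h y := by
  have hc' : HasDerivAt (fun t : ℝ => x + t • (y - x)) (y - x) 0 := by
    simpa using ((hasDerivAt_id (0:ℝ)).smul_const (y - x)).const_add x
  have hφ : HasDerivAt (fun t : ℝ => h (x + t • (y - x))) ⟪h', y - x⟫ 0 := by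
    have hx' : HasFDerivAt h ((InnerProductSpace.toDual ℝ X) h') ((fun t : ℝ => x + t • (y - x)) 0) := by
      simpa using hasGradientAt_iff_hasFDerivAt.1 hx
    have h2 := hx'.comp_hasDerivAt 0 hc'
    simpa [Function.comp_def] using h2
  have hconv : ConvexOn ℝ Set.univ (fun t : ℝ => h (x + t • (y - x))) := by
    have h3 := hc.comp_affineMap (AffineMap.lineMap x y)
    have heq : (fun t : ℝ => h (x + t • (y - x))) = (h ∘ (AffineMap.lineMap x y)) := by
      funext t
      simp only [Function.comp_apply, AffineMap.lineMap_apply_module]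
      congr 1
      module
    rw [heq]
    simpa using h3
  have h4 := hconv.le_slope_of_hasDerivAt (Set.mem_univ 0) (Set.mem_univ 1) zero_lt_one hφ
  simp [slope_def_field] at h4
  linarith

lemma descent_lemma {X : Type*} [NormedAddCommGroup X] [InnerProductSpace ℝ X]
    [CompleteSpace X] {f : X → ℝ} {f' : X → X} {L : ℝ}
    (hf : ∀ x, HasGradientAt f (f' x) x)
    (hlip : ∀ u v, ‖f' u - f' v‖ ≤ L * ‖u - v‖) (x y : X) :
    f y ≤ f x + ⟪f' x, y - x⟫ + L / 2 * ‖y - x‖ ^ 2 := by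
  set v := y - x with hv
  have hc' : ∀ t : ℝ, HasDerivAt (fun t : ℝ => x + t • v) v t := by
    intro t; simpa using ((hasDerivAt_id t).smul_const v).const_add x
  have hφ : ∀ t : ℝ, HasDerivAt (fun t : ℝ => f (x + t • v)) ⟪f' (x + t • v), v⟫ t := by
    intro t
    have hx' : HasFDerivAt f ((InnerProductSpace.toDual ℝ X) (f' (x + t • v)))
        ((fun t : ℝ => x + t • v) t) := by
      simpa using hasGradientAt_iff_hasFDerivAt.1 (hf (x + t • v))
    simpa [Function.comp_def] using hx'.comp_hasDerivAt t (hc' t)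
  have hf'cont : Continuous f' := by
    have : LipschitzWith (Real.toNNReal L) f' := by
      apply LipschitzWith.of_dist_le_mul
      intro u w
      rw [dist_eq_norm, dist_eq_norm]
      calc ‖f' u - f' w‖ ≤ L * ‖u - w‖ := hlip u w
        _ ≤ Real.toNNReal L * ‖u - w‖ := by
            gcongr; exact Real.le_coe_toNNReal L
    exact this.continuous
  have hψcont : Continuous (fun t : ℝ => ⟪f' (x + t • v), v⟫) := by
    apply Continuous.inner
    · exact hf'cont.comp (by continuity)
    · exact continuous_const
  have hint : f (x + (1:ℝ) • v) - f (x + (0:ℝ) • v) =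
      ∫ t in (0:ℝ)..1, ⟪f' (x + t • v), v⟫ := by
    refine (intervalIntegral.integral_eq_sub_of_hasDerivAt (fun t _ => hφ t) ?_).symm
    exact (hψcont.intervalIntegrable 0 1)
  have hmono : (∫ t in (0:ℝ)..1, ⟪f' (x + t • v), v⟫)
      ≤ ∫ t in (0:ℝ)..1, (⟪f' x, v⟫ + (L * ‖v‖ ^ 2) * t) := by
    apply intervalIntegral.integral_mono_on zero_le_one
      (hψcont.intervalIntegrable 0 1)
      ((by continuity : Continuous fun t : ℝ => ⟪f' x, v⟫ + (L * ‖v‖ ^ 2) * t).intervalIntegrable 0 1)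
    intro t ht
    rcases ht with ⟨ht0, _⟩
    have h1 : ⟪f' (x + t • v), v⟫ - ⟪f' x, v⟫ = ⟪f' (x + t • v) - f' x, v⟫ := by
      rw [inner_sub_left]
    have h2 : ⟪f' (x + t • v) - f' x, v⟫ ≤ ‖f' (x + t • v) - f' x‖ * ‖v‖ :=
      real_inner_le_norm _ _
    have h3 : ‖f' (x + t • v) - f' x‖ ≤ L * (t * ‖v‖) := by
      have := hlip (x + t • v) x
      simpa [norm_smul, abs_of_nonneg ht0] using this
    nlinarith [norm_nonneg v, norm_nonneg (f' (x + t • v) - f' x)]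
  have hval : (∫ t in (0:ℝ)..1, (⟪f' x, v⟫ + (L * ‖v‖ ^ 2) * t))
      = ⟪f' x, v⟫ + L / 2 * ‖v‖ ^ 2 := by
    rw [intervalIntegral.integral_add (intervalIntegrable_const)
      ((intervalIntegral.intervalIntegrable_id).const_mul _),
      intervalIntegral.integral_const, intervalIntegral.integral_const_mul,
      integral_id]
    simp; ring
  have h10 : x + (1:ℝ) • v = y := by rw [hv]; module
  have h00 : x + (0:ℝ) • v = x := by module
  rw [h10, h00] at hint
  linarith [hint, hmono, hval.le, hval.ge]


lemma bregman_lower {X : Type*} [NormedAddCommGroup X] [InnerProductSpace ℝ X]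
    [CompleteSpace X] {K : X → ℝ} {K' : X → X} {m : ℝ}
    (hK : ∀ x, HasGradientAt K (K' x) x)
    (hKsc : ConvexOn ℝ Set.univ (fun x => K x - m / 2 * ‖x‖ ^ 2)) (x y : X) :
    m / 2 * ‖y - x‖ ^ 2 ≤ K y - (K x + ⟪K' x, y - x⟫) := by
  have hnorm : HasFDerivAt (fun w : X => m / 2 * ‖w‖ ^ 2)
      ((InnerProductSpace.toDual ℝ X) (m • x)) x := by
    have h1 := (hasFDerivAt_id x).inner ℝ (hasFDerivAt_id x)
    have h2 := h1.const_mul (m / 2)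
    have heq : (fun w : X => m / 2 * ⟪w, w⟫) = (fun w : X => m / 2 * ‖w‖ ^ 2) := by
      funext w; rw [real_inner_self_eq_norm_sq]
    simp only [id_eq] at h2
    rw [heq] at h2
    refine h2.congr_fderiv ?_
    ext w
    simp [real_inner_comm x w, real_inner_smul_left]
    ring
  have hh : HasGradientAt (fun w : X => K w - m / 2 * ‖w‖ ^ 2) (K' x - m • x) x := by
    rw [hasGradientAt_iff_hasFDerivAt]
    refine ((hasGradientAt_iff_hasFDerivAt.1 (hK x)).sub hnorm).congr_fderiv ?_
    rw [map_sub]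
  have h3 := convex_grad_le hh hKsc y
  have e1 : ⟪K' x - m • x, y - x⟫ = ⟪K' x, y - x⟫ - m * ⟪x, y - x⟫ := by
    rw [inner_sub_left, real_inner_smul_left]
  have e2 : ⟪x, y - x⟫ = ⟪x, y⟫ - ‖x‖ ^ 2 := by
    rw [inner_sub_right, real_inner_self_eq_norm_sq]
  have e3 : ‖y - x‖ ^ 2 = ‖y‖ ^ 2 - 2 * ⟪y, x⟫ + ‖x‖ ^ 2 := by
    rw [norm_sub_sq_real]
  have e4 : ⟪y, x⟫ = ⟪x, y⟫ := real_inner_comm x y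
  simp only [e1, e2] at h3
  rw [e3, e4]
  nlinarith [h3]

/-- sufficient decrease for the coordinate Bregman proximal step in a product
of Euclidean spaces: if `y*` minimizes the `i`-th coordinate subproblem and agrees with `x`
outside block `i`, then `F y* - F x ≤ -a ‖x - y*‖²` with `a = (m - ε̄L)/(2ε̄)`. -/
theorem stmt_3 {N : ℕ} (E : Fin N → Type*)
    [∀ i, NormedAddCommGroup (E i)] [∀ i, InnerProductSpace ℝ (E i)]
    [∀ i, FiniteDimensional ℝ (E i)]
    (f : PiLp 2 E → ℝ) (f' : PiLp 2 E → PiLp 2 E)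
    (g : ∀ i, E i → ℝ)
    (K : PiLp 2 E → ℝ) (K' : PiLp 2 E → PiLp 2 E)
    (L m ε εbar : ℝ)
    (hf : ∀ x, HasGradientAt f (f' x) x)
    (hflip : ∀ u v, ‖f' u - f' v‖ ≤ L * ‖u - v‖)
    (hg : ∀ i, Continuous (g i))
    (hK : ∀ x, HasGradientAt K (K' x) x)
    (hKsc : ConvexOn ℝ Set.univ (fun x => K x - m / 2 * ‖x‖ ^ 2))
    (hε : 0 < ε) (hεε : ε ≤ εbar) (hεbar : εbar < m / L)
    (F : PiLp 2 E → ℝ) (hF : ∀ u, F u = f u + ∑ i, g i (u i))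
    (a : ℝ) (ha : a = (m - εbar * L) / (2 * εbar))
    (D : PiLp 2 E → PiLp 2 E → ℝ)
    (hD : ∀ u v, D u v = K v - (K u + ⟪K' u, v - u⟫))
    (x ystar : PiLp 2 E) (i : Fin N)
    (hmin : ∀ y : PiLp 2 E,
      ⟪f' x i, ystar i - x i⟫ + g i (ystar i) + (1 / ε) * D x ystar
        ≤ ⟪f' x i, y i - x i⟫ + g i (y i) + (1 / ε) * D x y)
    (hfix : ∀ j, j ≠ i → ystar j = x j) :
    F ystar - F x ≤ -a * ‖x - ystar‖ ^ 2 := by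

  rcases lt_trichotomy L 0 with hL | hL | hL
  · -- degenerate: L < 0 forces x = ystar
    have hxy : x = ystar := by
      by_contra hne
      have h1 : 0 < ‖x - ystar‖ := by
        rw [norm_pos_iff]; exact sub_ne_zero_of_ne hne
      have h2 := hflip x ystar
      nlinarith [norm_nonneg (f' x - f' ystar)]
    rw [hxy]
    simp
  · -- degenerate: L = 0 contradicts εbar < m / L
    rw [hL, div_zero] at hεbar
    linarith
  · -- main case : L > 0
    have hεb : 0 < εbar := lt_of_lt_of_le hε hεε
    have hm : 0 < m := by
      have h1 : εbar * L < m := (lt_div_iff₀ hL).1 hεbar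
      nlinarith
    set s := ‖ystar - x‖ ^ 2 with hs
    have hsnn : 0 ≤ s := sq_nonneg _
    have hDxx : D x x = 0 := by simp [hD]
    have h1 := hmin x
    rw [hDxx] at h1
    simp only [sub_self, inner_zero_right, mul_zero, add_zero, zero_add] at h1
    have h2 : m / 2 * s ≤ D x ystar := by
      rw [hD]
      exact bregman_lower hK hKsc x ystar
    have h3 : f ystar ≤ f x + ⟪f' x, ystar - x⟫ + L / 2 * s :=
      descent_lemma hf hflip x ystar
    have h4 : ⟪f' x, ystar - x⟫ = ⟪f' x i, ystar i - x i⟫ := by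
      rw [PiLp.inner_apply]
      rw [Finset.sum_eq_single i]
      · rfl
      · intro j _ hj
        have hz : (ystar - x) j = 0 := by
          show ystar j - x j = 0
          rw [hfix j hj, sub_self]
        rw [hz, inner_zero_right]
      · intro h; exact absurd (Finset.mem_univ i) h
    rw [h4] at h3
    have h5 : ∑ j, g j (ystar j) - ∑ j, g j (x j) = g i (ystar i) - g i (x i) := by
      rw [← Finset.sum_sub_distrib]
      rw [Finset.sum_eq_single i]
      · intro j _ hj; rw [hfix j hj, sub_self]
      · intro h; exact absurd (Finset.mem_univ i) h
    have hcoef : a ≤ m / (2 * ε) - L / 2 := by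
      rw [ha, div_le_iff₀ (by linarith : (0:ℝ) < 2 * εbar)]
      have e : (m / (2 * ε) - L / 2) * (2 * εbar) = m * εbar / ε - L * εbar := by
        field_simp
      have key : m ≤ m * εbar / ε := by
        rw [le_div_iff₀ hε]
        nlinarith [mul_le_mul_of_nonneg_left hεε hm.le]
      rw [e]; linarith
    have hq1 : 1 / ε * (m / 2 * s) ≤ 1 / ε * D x ystar :=
      mul_le_mul_of_nonneg_left h2 (by positivity)
    have hq2 : 1 / ε * (m / 2 * s) = m / (2 * ε) * s := by ring
    have hq3 : a * s ≤ (m / (2 * ε) - L / 2) * s :=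
      mul_le_mul_of_nonneg_right hcoef hsnn
    have h6 : ‖x - ystar‖ ^ 2 = s := by rw [hs, norm_sub_rev]
    rw [hF ystar, hF x, h6]
    nlinarith [h1, h3, h5, hq1, hq2, hq3]
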